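/- For every α ∈ (0, 1/2], there exists an L^2(G_α)-orthonormal sequence of functions in H^1(G_α) whose H^1(G_α)-norms are uniformly bounded; in particular the Neumann extension H_N on the diagonal comb graph G_α has nonempty essential spectrum. -/

import Mathlib

open MeasureTheory Set Filter
open scoped ENNReal

/-- A metric graph structure on a metric space `X`: a countable collection of edges,
each parametrised by arc length over `[0, len e]`, together with vertices identified
with edge endpoints; the interiors of distinct edges are disjoint, the edges cover `X`,
and the metric of `X` is the induced path metric (characterised by the fact that the
edge parametrisations are `1`-Lipschitz and `dist x y` is the largest value `u x - u y`
over all continuous, edgewise `1`-Lipschitz functions `u : X → ℝ`). -/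
structure MetricGraphOn (X : Type) [MetricSpace X] where
  V : Type
  E : Type
  countableV : Countable V
  countableE : Countable E
  len : E → ℝ
  len_pos : ∀ e, 0 < len e
  edgeMap : E → ℝ → X
  vertexMap : V → X
  endpoint : E → Bool → V
  edgeMap_cont : ∀ e, ContinuousOn (edgeMap e) (Icc 0 (len e))
  edgeMap_injOn : ∀ e, InjOn (edgeMap e) (Ico 0 (len e))
  edgeMap_zero : ∀ e, edgeMap e 0 = vertexMap (endpoint e false)
  edgeMap_len : ∀ e, edgeMap e (len e) = vertexMap (endpoint e true)
  interior_disjoint : ∀ e e', e ≠ e' → ∀ s ∈ Ioo 0 (len e), ∀ t ∈ Ioo 0 (len e'),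
    edgeMap e s ≠ edgeMap e' t
  interior_not_vertex : ∀ e, ∀ s ∈ Ioo 0 (len e), ∀ v, edgeMap e s ≠ vertexMap v
  vertexMap_inj : Function.Injective vertexMap
  cover : ∀ x : X, ∃ e, ∃ t ∈ Icc 0 (len e), edgeMap e t = x
  dist_le : ∀ e, ∀ s ∈ Icc 0 (len e), ∀ t ∈ Icc 0 (len e),
    dist (edgeMap e s) (edgeMap e t) ≤ |s - t|
  dist_ge : ∀ u : X → ℝ, Continuous u →
    (∀ e, ∀ s ∈ Icc 0 (len e), ∀ t ∈ Icc 0 (len e),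
      |u (edgeMap e s) - u (edgeMap e t)| ≤ |s - t|) →
    ∀ x y, u x - u y ≤ dist x y

namespace MetricGraphOn

variable {X : Type} [MetricSpace X]

/-- The (a.e. defined) derivative of `f` along the edge `e`, in the arc-length
parametrisation of the edge. -/
noncomputable def edgeDeriv (G : MetricGraphOn X) (f : X → ℝ) (e : G.E) : ℝ → ℝ :=
  deriv (f ∘ G.edgeMap e)

/-- The subset of `X` consisting of the (closed) edges in `A`. -/
def subgraphSet (G : MetricGraphOn X) (A : Set G.E) : Set X :=
  ⋃ e ∈ A, G.edgeMap e '' Icc 0 (G.len e)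

/-- `∫_e |f|²` along a single edge. -/
noncomputable def edgeMass (G : MetricGraphOn X) (f : X → ℝ) (e : G.E) : ℝ :=
  ∫ t in Ioo 0 (G.len e), (f (G.edgeMap e t)) ^ 2

/-- `∫_e |f'|²` along a single edge. -/
noncomputable def edgeEnergy (G : MetricGraphOn X) (f : X → ℝ) (e : G.E) : ℝ :=
  ∫ t in Ioo 0 (G.len e), (G.edgeDeriv f e t) ^ 2

/-- Membership in the Sobolev space `H¹` of the subgraph given by the edge set `A`:
continuity on the subgraph, edgewise absolute continuity with square-integrable
derivative, and finiteness of the total `H¹` norm. -/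
def MemH1On (G : MetricGraphOn X) (A : Set G.E) (f : X → ℝ) : Prop :=
  ContinuousOn f (G.subgraphSet A) ∧
  (∀ e ∈ A, IntegrableOn (fun t => (G.edgeDeriv f e t) ^ 2) (Ioo 0 (G.len e))) ∧
  (∀ e ∈ A, ∀ t ∈ Icc (0:ℝ) (G.len e),
    f (G.edgeMap e t) = f (G.edgeMap e 0) + ∫ s in Ioo 0 t, G.edgeDeriv f e s) ∧
  Summable (fun e : A => G.edgeMass f (e : G.E) + G.edgeEnergy f (e : G.E))

/-- Membership in `H¹(G)`. -/
def MemH1 (G : MetricGraphOn X) (f : X → ℝ) : Prop :=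
  Continuous f ∧ G.MemH1On Set.univ f

/-- The squared `L²` norm of `f` over the edges in `A`. -/
noncomputable def l2normSqOn (G : MetricGraphOn X) (A : Set G.E) (f : X → ℝ) : ℝ :=
  ∑' e : A, G.edgeMass f (e : G.E)

/-- The squared `L²` norm of `f'` over the edges in `A`. -/
noncomputable def derivNormSqOn (G : MetricGraphOn X) (A : Set G.E) (f : X → ℝ) : ℝ :=
  ∑' e : A, G.edgeEnergy f (e : G.E)

/-- The squared `L²` norm of `f` on `G`. -/
noncomputable def l2normSq (G : MetricGraphOn X) (f : X → ℝ) : ℝ :=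
  G.l2normSqOn Set.univ f

/-- The squared `L²` norm of `f'` on `G` (the Dirichlet energy of `f`). -/
noncomputable def derivNormSq (G : MetricGraphOn X) (f : X → ℝ) : ℝ :=
  G.derivNormSqOn Set.univ f

/-- The squared `H¹` norm of `f`. -/
noncomputable def h1normSq (G : MetricGraphOn X) (f : X → ℝ) : ℝ :=
  G.l2normSq f + G.derivNormSq f

/-- The `L²` inner product on `G`. -/
noncomputable def l2inner (G : MetricGraphOn X) (f g : X → ℝ) : ℝ :=
  ∑' e : G.E, ∫ t in Ioo 0 (G.len e), f (G.edgeMap e t) * g (G.edgeMap e t)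

/-- The Dirichlet form (inner product of derivatives) on `G`. -/
noncomputable def derivInner (G : MetricGraphOn X) (f g : X → ℝ) : ℝ :=
  ∑' e : G.E, ∫ t in Ioo 0 (G.len e), G.edgeDeriv f e t * G.edgeDeriv g e t

/-- The `k`-th min-max (Courant–Fischer) value of the quadratic form
`f ↦ ∫ |f'|²` (over the edges of `A`) with form domain `K`: the infimum over all
`k`-dimensional subspaces of `K` of the largest Rayleigh quotient on the subspace.
For a self-adjoint Laplacian with purely discrete spectrum this is its `k`-th
eigenvalue (`k = 1` giving the lowest one). -/
noncomputable def eigenOn (G : MetricGraphOn X) (A : Set G.E) (K : Set (X → ℝ))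
    (k : ℕ) : ℝ :=
  sInf { μ : ℝ | ∃ φ : Fin k → X → ℝ, (∀ i, φ i ∈ K) ∧
    LinearIndependent ℝ (fun i => (G.subgraphSet A).restrict (φ i)) ∧
    ∀ c : Fin k → ℝ,
      G.derivNormSqOn A (∑ i, c i • φ i) ≤ μ * G.l2normSqOn A (∑ i, c i • φ i) }

/-- The `k`-th eigenvalue `μ_k(G)` of the Neumann extension (standard
continuity–Kirchhoff conditions at all vertices, Neumann conditions at all ends). -/
noncomputable def neumannEigen (G : MetricGraphOn X) (k : ℕ) : ℝ :=
  G.eigenOn Set.univ {f | G.MemH1 f} k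

/-- `f` vanishes at the point `y` of the completion of `X`. -/
def VanishesAt (f : X → ℝ) (y : UniformSpace.Completion X) : Prop :=
  Tendsto f (comap ((↑) : X → UniformSpace.Completion X) (nhds y)) (nhds 0)

/-- Membership in `H¹₀(G; 𝔙)`: `H¹`-functions vanishing on the set `𝔙` of
vertices and/or ends (viewed inside the completion of `X`). -/
def H10Mem (G : MetricGraphOn X) (𝔙 : Set (UniformSpace.Completion X))
    (f : X → ℝ) : Prop :=
  G.MemH1 f ∧ ∀ y ∈ 𝔙, VanishesAt f y

/-- The `k`-th eigenvalue `λ_k(G; 𝔙)` of the Laplacian with Dirichlet conditions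
on `𝔙` and standard (continuity–Kirchhoff/Neumann) conditions elsewhere. -/
noncomputable def dirichletEigen (G : MetricGraphOn X)
    (𝔙 : Set (UniformSpace.Completion X)) (k : ℕ) : ℝ :=
  G.eigenOn Set.univ {f | G.H10Mem 𝔙 f} k

/-- The set of (topological = graph) ends of `G`, realised as the points of the
completion of `X` that do not belong to `X`. -/
def Ends (_G : MetricGraphOn X) : Set (UniformSpace.Completion X) :=
  {y | y ∉ Set.range ((↑) : X → UniformSpace.Completion X)}

/-- The set of vertices of `G`, viewed inside the completion of `X`. -/
def vertexPoints (G : MetricGraphOn X) : Set (UniformSpace.Completion X) :=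
  Set.range (fun v => ((G.vertexMap v : X) : UniformSpace.Completion X))

/-- The degree of a vertex (loops counted twice). -/
noncomputable def degree (G : MetricGraphOn X) (v : G.V) : ℕ :=
  {p : G.E × Bool | G.endpoint p.1 p.2 = v}.ncard

/-- `G` is locally finite: every vertex has finite degree. -/
def LocallyFinite (G : MetricGraphOn X) : Prop :=
  ∀ v : G.V, {p : G.E × Bool | G.endpoint p.1 p.2 = v}.Finite

/-- A cycle in `G`: a compact subset homeomorphic to a circle. -/
def IsCycle (_G : MetricGraphOn X) (C : Set X) : Prop :=
  IsCompact C ∧ Nonempty (C ≃ₜ Metric.sphere (0 : ℝ × ℝ) 1)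

/-- `G` has (first) Betti number `β`: there is a minimal finite family of `β` cycles
whose union contains every cycle of `G`. -/
def HasBettiNumber (G : MetricGraphOn X) (β : ℕ) : Prop :=
  ∃ 𝒞 : Finset (Set X), 𝒞.card = β ∧ (∀ C ∈ 𝒞, G.IsCycle C) ∧
    (∀ C, G.IsCycle C → C ⊆ ⋃ C' ∈ 𝒞, C') ∧
    ∀ 𝒞' : Finset (Set X), (∀ C ∈ 𝒞', G.IsCycle C) →
      (∀ C, G.IsCycle C → C ⊆ ⋃ C' ∈ 𝒞', C') → β ≤ 𝒞'.card

/-- The embedding of `K ⊆ H¹(G)` into `L²(G)` is compact: every sequence in `K`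
bounded in the `H¹` norm has a subsequence which is Cauchy in the `L²` norm. -/
def CompactlyEmbedded (G : MetricGraphOn X) (K : Set (X → ℝ)) : Prop :=
  ∀ u : ℕ → X → ℝ, (∀ n, u n ∈ K) → (∀ n, G.h1normSq (u n) ≤ 1) →
    ∃ φ : ℕ → ℕ, StrictMono φ ∧
      ∀ ε : ℝ, 0 < ε → ∃ N, ∀ m, N ≤ m → ∀ n, N ≤ n →
        G.l2normSq (u (φ m) - u (φ n)) ≤ ε

/-- The self-adjoint operator with form `f ↦ ∫ |f'|²` and form domain `K` has
purely discrete spectrum (equivalently, compact resolvent): its min-max values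
tend to `+∞`. -/
def HasPurelyDiscreteSpectrumOn (G : MetricGraphOn X) (K : Set (X → ℝ)) : Prop :=
  Tendsto (fun k => G.eigenOn Set.univ K k) atTop atTop

/-- The volume (total length) of a subset `S` of `G`. -/
noncomputable def vol (G : MetricGraphOn X) (S : Set X) : ℝ≥0∞ :=
  ∑' e : G.E, volume (G.edgeMap e ⁻¹' S ∩ Ioo 0 (G.len e))

/-- The set of vertices incident to some edge in `A`. -/
def vertexSetOf (G : MetricGraphOn X) (A : Set G.E) : Set G.V :=
  {v | ∃ e ∈ A, ∃ b, G.endpoint e b = v}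

/-- Membership in `H¹₀(G)`, the closure in `H¹(G)` of the compactly supported
`H¹` functions (the form domain of the Friedrichs extension). -/
def H100Mem (G : MetricGraphOn X) (f : X → ℝ) : Prop :=
  G.MemH1 f ∧ ∃ u : ℕ → X → ℝ, (∀ n, G.MemH1 (u n) ∧ HasCompactSupport (u n)) ∧
    Tendsto (fun n => G.h1normSq (f - u n)) atTop (nhds 0)

/-- The `k`-th eigenvalue `λ_k(G)` of the Friedrichs extension. -/
noncomputable def friedrichsEigen (G : MetricGraphOn X) (k : ℕ) : ℝ :=
  G.eigenOn Set.univ {f | G.H100Mem f} k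

end MetricGraphOn

/-- `G` is the "diagonal comb" metric graph `G_α`: the interval `(0,1]` with a
vertex at each point `n^{-α}` (`n ≥ 1`) carrying a pendant edge ("tooth") of length
`n^{-α}`. Shaft edges are indexed by `Sum.inl n` (the edge from `(n+2)^{-α}` to
`(n+1)^{-α}`), teeth by `Sum.inr n` (the tooth at `(n+1)^{-α}`); `Sum.inl n`
indexes the shaft vertex at `(n+1)^{-α}` and `Sum.inr n` the tip of the `n`-th
tooth. -/
def IsDiagonalComb {X : Type} [MetricSpace X] (G : MetricGraphOn X) (α : ℝ) : Prop :=
  ∃ (eE : (ℕ ⊕ ℕ) ≃ G.E) (eV : (ℕ ⊕ ℕ) ≃ G.V),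
    (∀ n : ℕ, G.len (eE (Sum.inl n)) = ((n : ℝ) + 1) ^ (-α) - ((n : ℝ) + 2) ^ (-α)) ∧
    (∀ n : ℕ, G.len (eE (Sum.inr n)) = ((n : ℝ) + 1) ^ (-α)) ∧
    (∀ n : ℕ, G.endpoint (eE (Sum.inl n)) false = eV (Sum.inl (n + 1)) ∧
      G.endpoint (eE (Sum.inl n)) true = eV (Sum.inl n)) ∧
    (∀ n : ℕ, G.endpoint (eE (Sum.inr n)) false = eV (Sum.inl n) ∧
      G.endpoint (eE (Sum.inr n)) true = eV (Sum.inr n))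

/-!
For a scale `A`, take the trapezoidal profile in the position `x ∈ (0, 1]` on the comb that is `0`
beyond the shaft vertex `A`, rises to `1` at the vertex `2A`, stays `1` up to the vertex `4A` and
returns to `0` at the vertex `8A` (vertex `k` sits at `(k + 1)^{-α}`). Give every vertex the value
of the profile at its base on the shaft and interpolate affinely along the edges. The resulting bump
is constant on every tooth, so its mass is at least the total length `(2A + 1)(4A + 1)^{-α}` of the
teeth on the plateau, while its energy lives on a piece of shaft of length `O((4A + 1)^{-α})` where
the profile is Lipschitz with constant `O((4A + 1)^{α})`, hence is `O((4A + 1)^{α})`. The Rayleigh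
quotient is therefore `O(A^{2α - 1})`, bounded when `α ≤ 1/2`. Scales growing by factors of `8`
give disjointly supported bumps; normalised, they are an `L²`-orthonormal sequence bounded in `H¹`,
and their spans keep every min-max value below a fixed bound.

Continuity of the bumps is the delicate point: `X` may contain the limit of the shaft vertices, and
the bumps are supported far enough out to avoid the edges through that point.
-/

open Function

theorem IsCompact.continuousOn_image_of_comp {α β δ : Type*} [TopologicalSpace α]
    [TopologicalSpace β] [T2Space β] [TopologicalSpace δ] {K : Set α} (hK : IsCompact K)
    {f : α → β} (hf : ContinuousOn f K) {g : β → δ} (hg : ContinuousOn (g ∘ f) K) :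
    ContinuousOn g (f '' K) := by
  rw [continuousOn_iff_isClosed] at hg ⊢
  intro s hs
  obtain ⟨u, hu, hus⟩ := hg s hs
  refine ⟨f '' (u ∩ K),
    ((hK.inter_left hu).image_of_continuousOn (hf.mono inter_subset_right)).isClosed, ?_⟩
  ext y
  constructor
  · rintro ⟨hy, x, hx, rfl⟩
    have hx' : x ∈ (g ∘ f) ⁻¹' s ∩ K := ⟨hy, hx⟩
    rw [hus] at hx'
    exact ⟨⟨x, hx', rfl⟩, x, hx, rfl⟩
  · rintro ⟨⟨x, hx, rfl⟩, -⟩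
    have hx' : x ∈ (g ∘ f) ⁻¹' s ∩ K := by rw [hus]; exact hx
    exact ⟨hx'.1, x, hx.2, rfl⟩

lemma setIntegral_Ioo_const {L : ℝ} (hL : 0 ≤ L) (c : ℝ) : ∫ _ in Ioo 0 L, c = L * c := by
  rw [setIntegral_const, Real.volume_real_Ioo_of_le hL, sub_zero, smul_eq_mul]

lemma Real.sInf_le_max_zero_of_mem {S : Set ℝ} {μ : ℝ} (hμ : μ ∈ S) : sInf S ≤ max μ 0 := by
  by_cases hbdd : BddBelow S
  · exact (csInf_le hbdd hμ).trans (le_max_left _ _)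
  · rw [Real.sInf_of_not_bddBelow hbdd]
    exact le_max_right _ _

lemma exists_eq_cond_of_notMem_Ioo {L t : ℝ} (ht : t ∈ Icc 0 L) (h : t ∉ Ioo 0 L) :
    ∃ b : Bool, t = cond b L 0 := by
  rcases eq_or_lt_of_le ht.1 with h0 | h0
  · exact ⟨false, h0.symm⟩
  · exact ⟨true, le_antisymm ht.2 (not_lt.1 fun hL => h ⟨h0, hL⟩)⟩

namespace MetricGraphOn

variable {X : Type} [MetricSpace X] (G : MetricGraphOn X)

def arc (e : G.E) : Set X := G.edgeMap e '' Icc 0 (G.len e)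

lemma isClosed_arc (e : G.E) : IsClosed (G.arc e) :=
  (isCompact_Icc.image_of_continuousOn (G.edgeMap_cont e)).isClosed

lemma exists_mem_arc (x : X) : ∃ e, x ∈ G.arc e :=
  let ⟨e, t, ht, hx⟩ := G.cover x
  ⟨e, t, ht, hx⟩

lemma subgraphSet_univ : G.subgraphSet univ = univ :=
  eq_univ_of_forall fun x =>
    let ⟨e, hx⟩ := G.exists_mem_arc x
    mem_biUnion (mem_univ e) hx

lemma cond_mem_Icc (e : G.E) (b : Bool) : cond b (G.len e) 0 ∈ Icc 0 (G.len e) := by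
  cases b <;> simp [(G.len_pos e).le]

lemma edgeMap_cond (e : G.E) (b : Bool) :
    G.edgeMap e (cond b (G.len e) 0) = G.vertexMap (G.endpoint e b) := by
  cases b
  exacts [G.edgeMap_zero e, G.edgeMap_len e]

lemma eq_or_endpoint_eq_of_edgeMap_eq {e e' : G.E} {t t' : ℝ} (ht : t ∈ Icc 0 (G.len e))
    (ht' : t' ∈ Icc 0 (G.len e')) (h : G.edgeMap e t = G.edgeMap e' t') :
    (e = e' ∧ t = t') ∨ ∃ b b', t = cond b (G.len e) 0 ∧ t' = cond b' (G.len e') 0 ∧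
      G.endpoint e b = G.endpoint e' b' := by
  by_cases hi : t ∈ Ioo 0 (G.len e)
  · refine Or.inl ?_
    by_cases hi' : t' ∈ Ioo 0 (G.len e')
    · by_cases hee : e = e'
      · subst hee
        exact ⟨rfl, G.edgeMap_injOn e (Ioo_subset_Ico_self hi) (Ioo_subset_Ico_self hi') h⟩
      · exact absurd h (G.interior_disjoint e e' hee t hi t' hi')
    · obtain ⟨b', rfl⟩ := exists_eq_cond_of_notMem_Ioo ht' hi'
      exact absurd (h.trans (G.edgeMap_cond e' b')) (G.interior_not_vertex e t hi _)
  · obtain ⟨b, rfl⟩ := exists_eq_cond_of_notMem_Ioo ht hi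
    by_cases hi' : t' ∈ Ioo 0 (G.len e')
    · exact absurd ((G.edgeMap_cond e b).symm.trans h).symm (G.interior_not_vertex e' t' hi' _)
    · obtain ⟨b', rfl⟩ := exists_eq_cond_of_notMem_Ioo ht' hi'
      exact Or.inr ⟨b, b', rfl, rfl,
        G.vertexMap_inj <| by rw [← G.edgeMap_cond, ← G.edgeMap_cond, h]⟩

lemma dist_edgeMap_vertexMap_le (e : G.E) (b : Bool) {t : ℝ} (ht : t ∈ Icc 0 (G.len e)) :
    dist (G.edgeMap e t) (G.vertexMap (G.endpoint e b)) ≤ G.len e := by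
  rw [← G.edgeMap_cond]
  refine (G.dist_le e t ht _ (G.cond_mem_Icc e b)).trans ?_
  rw [abs_le]
  cases b <;> constructor <;> simp <;> linarith [ht.1, ht.2]

noncomputable def affineOnEdge (W : G.V → ℝ) (e : G.E) (t : ℝ) : ℝ :=
  W (G.endpoint e false) + t / G.len e * (W (G.endpoint e true) - W (G.endpoint e false))

lemma affineOnEdge_cond (W : G.V → ℝ) (e : G.E) (b : Bool) :
    G.affineOnEdge W e (cond b (G.len e) 0) = W (G.endpoint e b) := by
  cases b <;> simp [affineOnEdge, (G.len_pos e).ne']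

lemma affineOnEdge_eq_zero {W : G.V → ℝ} {e : G.E} (hW : ∀ b, W (G.endpoint e b) = 0) (t : ℝ) :
    G.affineOnEdge W e t = 0 := by
  simp [affineOnEdge, hW]

lemma continuous_affineOnEdge (W : G.V → ℝ) (e : G.E) : Continuous (G.affineOnEdge W e) := by
  unfold affineOnEdge
  fun_prop

lemma hasDerivAt_affineOnEdge (W : G.V → ℝ) (e : G.E) (t : ℝ) :
    HasDerivAt (G.affineOnEdge W e)
      ((W (G.endpoint e true) - W (G.endpoint e false)) / G.len e) t := by
  have h := (((hasDerivAt_id t).div_const (G.len e)).mul_const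
    (W (G.endpoint e true) - W (G.endpoint e false))).const_add (W (G.endpoint e false))
  exact h.congr_deriv (by ring)

lemma affineOnEdge_eq_of_edgeMap_eq (W : G.V → ℝ) {e e' : G.E} {t t' : ℝ}
    (ht : t ∈ Icc 0 (G.len e)) (ht' : t' ∈ Icc 0 (G.len e'))
    (h : G.edgeMap e t = G.edgeMap e' t') : G.affineOnEdge W e t = G.affineOnEdge W e' t' := by
  obtain ⟨rfl, rfl⟩ | ⟨b, b', rfl, rfl, hbb⟩ := G.eq_or_endpoint_eq_of_edgeMap_eq ht ht' h
  · rfl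
  · rw [affineOnEdge_cond, affineOnEdge_cond, hbb]

-- Well defined since two edges through a point meet at a common vertex
-- (`affineOnEdge_eq_of_edgeMap_eq`), so the edge chosen by `G.cover x` does not matter.
noncomputable def piecewiseAffine : (G.V → ℝ) →ₗ[ℝ] X → ℝ where
  toFun W x := G.affineOnEdge W (G.cover x).choose (G.cover x).choose_spec.choose
  map_add' W W' := funext fun x => by simp only [affineOnEdge, Pi.add_apply]; ring
  map_smul' c W := funext fun x => by
    simp only [affineOnEdge, Pi.smul_apply, smul_eq_mul, RingHom.id_apply]; ring

def VanishesOffEdges (F : Finset G.E) (f : X → ℝ) : Prop :=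
  ∀ e ∉ F, ∀ t ∈ Ioo 0 (G.len e), f (G.edgeMap e t) = 0

variable {G}

lemma edgeDeriv_congr {f g : X → ℝ} {e : G.E}
    (h : EqOn (f ∘ G.edgeMap e) (g ∘ G.edgeMap e) (Ioo 0 (G.len e))) {t : ℝ}
    (ht : t ∈ Ioo 0 (G.len e)) : G.edgeDeriv f e t = G.edgeDeriv g e t :=
  (eventuallyEq_of_mem (Ioo_mem_nhds ht.1 ht.2) h).deriv_eq

lemma edgeMass_congr {f g : X → ℝ} {e : G.E}
    (h : EqOn (f ∘ G.edgeMap e) (g ∘ G.edgeMap e) (Ioo 0 (G.len e))) :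
    G.edgeMass f e = G.edgeMass g e :=
  setIntegral_congr_fun measurableSet_Ioo fun _ ht => congrArg (· ^ 2) (h ht)

lemma edgeEnergy_congr {f g : X → ℝ} {e : G.E}
    (h : EqOn (f ∘ G.edgeMap e) (g ∘ G.edgeMap e) (Ioo 0 (G.len e))) :
    G.edgeEnergy f e = G.edgeEnergy g e :=
  setIntegral_congr_fun measurableSet_Ioo fun _ ht => by rw [edgeDeriv_congr h ht]

lemma edgeDeriv_smul (c : ℝ) (f : X → ℝ) (e : G.E) (t : ℝ) :
    G.edgeDeriv (c • f) e t = c * G.edgeDeriv f e t :=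
  deriv_const_mul_field (v := f ∘ G.edgeMap e) c

lemma edgeMass_smul (c : ℝ) (f : X → ℝ) (e : G.E) :
    G.edgeMass (c • f) e = c ^ 2 * G.edgeMass f e := by
  simp only [edgeMass, Pi.smul_apply, smul_eq_mul, mul_pow, integral_const_mul]

lemma edgeEnergy_smul (c : ℝ) (f : X → ℝ) (e : G.E) :
    G.edgeEnergy (c • f) e = c ^ 2 * G.edgeEnergy f e := by
  simp only [edgeEnergy, edgeDeriv_smul, mul_pow, integral_const_mul]

lemma l2normSq_smul (c : ℝ) (f : X → ℝ) : G.l2normSq (c • f) = c ^ 2 * G.l2normSq f := by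
  simp only [l2normSq, l2normSqOn, edgeMass_smul, tsum_mul_left]

lemma derivNormSq_smul (c : ℝ) (f : X → ℝ) :
    G.derivNormSq (c • f) = c ^ 2 * G.derivNormSq f := by
  simp only [derivNormSq, derivNormSqOn, edgeEnergy_smul, tsum_mul_left]

lemma l2inner_self (f : X → ℝ) : G.l2inner f f = G.l2normSq f := by
  simp only [l2inner, l2normSq, l2normSqOn, edgeMass, sq]
  exact (tsum_univ fun e => ∫ t in Ioo 0 (G.len e), f (G.edgeMap e t) * f (G.edgeMap e t)).symm

lemma edgeMass_nonneg (f : X → ℝ) (e : G.E) : 0 ≤ G.edgeMass f e :=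
  integral_nonneg fun _ => sq_nonneg _

section EdgewiseQuadratic

-- `Q` stands for `edgeMass` or `edgeEnergy`: it only sees the interior of each edge and scales
-- quadratically, which is all the Pythagorean identities below use.
variable {Q : (X → ℝ) → G.E → ℝ}

lemma eq_zero_of_edgewiseQuadratic
    (hQ : ∀ f g e, EqOn (f ∘ G.edgeMap e) (g ∘ G.edgeMap e) (Ioo 0 (G.len e)) → Q f e = Q g e)
    (hQs : ∀ (c : ℝ) f e, Q (c • f) e = c ^ 2 * Q f e) {f : X → ℝ} {e : G.E}
    (hf : ∀ t ∈ Ioo 0 (G.len e), f (G.edgeMap e t) = 0) : Q f e = 0 := by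
  rw [hQ f 0 e hf, ← zero_smul ℝ (0 : X → ℝ), hQs, zero_pow two_ne_zero, zero_mul]

lemma apply_sum_smul_of_pairwiseDisjoint
    (hQ : ∀ f g e, EqOn (f ∘ G.edgeMap e) (g ∘ G.edgeMap e) (Ioo 0 (G.len e)) → Q f e = Q g e)
    (hQs : ∀ (c : ℝ) f e, Q (c • f) e = c ^ 2 * Q f e) {ι : Type*} [Fintype ι]
    {u : ι → X → ℝ} {F : ι → Finset G.E} (hF : Pairwise (Disjoint on F))
    (hu : ∀ i, G.VanishesOffEdges (F i) (u i)) (c : ι → ℝ) (e : G.E) :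
    Q (∑ i, c i • u i) e = ∑ i, c i ^ 2 * Q (u i) e := by
  by_cases he : ∃ i, e ∈ F i
  · obtain ⟨i, hi⟩ := he
    have hj : ∀ j ≠ i, e ∉ F j := fun j hji hj => Finset.disjoint_left.1 (hF hji) hj hi
    have hsum : ∑ j, c j ^ 2 * Q (u j) e = c i ^ 2 * Q (u i) e :=
      Finset.sum_eq_single i (fun j _ hji => by
        rw [eq_zero_of_edgewiseQuadratic hQ hQs (hu j e (hj j hji)), mul_zero]) (by simp)
    rw [hsum, ← hQs]
    refine hQ _ _ e fun t ht => ?_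
    simp only [Function.comp_apply, Finset.sum_apply, Pi.smul_apply, smul_eq_mul]
    exact Finset.sum_eq_single i (fun j _ hji => by rw [hu j e (hj j hji) t ht, mul_zero])
      (by simp)
  · simp only [not_exists] at he
    rw [eq_zero_of_edgewiseQuadratic hQ hQs fun t ht => ?_,
      Finset.sum_eq_zero fun i _ => by
        rw [eq_zero_of_edgewiseQuadratic hQ hQs (hu i e (he i)), mul_zero]]
    simp only [Finset.sum_apply, Pi.smul_apply, smul_eq_mul]
    exact Finset.sum_eq_zero fun i _ => by rw [hu i e (he i) t ht, mul_zero]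

lemma tsum_sum_smul_of_pairwiseDisjoint
    (hQ : ∀ f g e, EqOn (f ∘ G.edgeMap e) (g ∘ G.edgeMap e) (Ioo 0 (G.len e)) → Q f e = Q g e)
    (hQs : ∀ (c : ℝ) f e, Q (c • f) e = c ^ 2 * Q f e) {ι : Type*} [Fintype ι]
    {u : ι → X → ℝ} {F : ι → Finset G.E} (hF : Pairwise (Disjoint on F))
    (hu : ∀ i, G.VanishesOffEdges (F i) (u i)) (c : ι → ℝ) :
    ∑' e, Q (∑ i, c i • u i) e = ∑ i, c i ^ 2 * ∑' e, Q (u i) e := by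
  have hsum : ∀ i ∈ Finset.univ, Summable fun e => c i ^ 2 * Q (u i) e := fun i _ =>
    summable_of_ne_finset_zero (s := F i) fun e he => by
      rw [eq_zero_of_edgewiseQuadratic hQ hQs (hu i e he), mul_zero]
  simp only [apply_sum_smul_of_pairwiseDisjoint hQ hQs hF hu, Summable.tsum_finsetSum hsum,
    tsum_mul_left]

end EdgewiseQuadratic

lemma edgeMass_eq_zero {F : Finset G.E} {f : X → ℝ} (hf : G.VanishesOffEdges F f) {e : G.E}
    (he : e ∉ F) : G.edgeMass f e = 0 :=
  eq_zero_of_edgewiseQuadratic (fun _ _ _ => edgeMass_congr) edgeMass_smul (hf e he)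

lemma edgeEnergy_eq_zero {F : Finset G.E} {f : X → ℝ} (hf : G.VanishesOffEdges F f) {e : G.E}
    (he : e ∉ F) : G.edgeEnergy f e = 0 :=
  eq_zero_of_edgewiseQuadratic (fun _ _ _ => edgeEnergy_congr) edgeEnergy_smul (hf e he)

lemma l2normSq_eq_sum {F : Finset G.E} {f : X → ℝ} (hf : G.VanishesOffEdges F f) :
    G.l2normSq f = ∑ e ∈ F, G.edgeMass f e := by
  rw [l2normSq, l2normSqOn, tsum_univ fun e => G.edgeMass f e]
  exact tsum_eq_sum fun e he => edgeMass_eq_zero hf he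

lemma derivNormSq_eq_sum {F : Finset G.E} {f : X → ℝ} (hf : G.VanishesOffEdges F f) :
    G.derivNormSq f = ∑ e ∈ F, G.edgeEnergy f e := by
  rw [derivNormSq, derivNormSqOn, tsum_univ fun e => G.edgeEnergy f e]
  exact tsum_eq_sum fun e he => edgeEnergy_eq_zero hf he

section DisjointSupports

variable {ι : Type*} [Fintype ι] {u : ι → X → ℝ} {F : ι → Finset G.E}

lemma l2normSq_sum_smul (hF : Pairwise (Disjoint on F))
    (hu : ∀ i, G.VanishesOffEdges (F i) (u i)) (c : ι → ℝ) :
    G.l2normSq (∑ i, c i • u i) = ∑ i, c i ^ 2 * G.l2normSq (u i) := by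
  simp only [l2normSq, l2normSqOn, tsum_univ]
  exact tsum_sum_smul_of_pairwiseDisjoint (fun _ _ _ => edgeMass_congr) edgeMass_smul hF hu c

lemma derivNormSq_sum_smul (hF : Pairwise (Disjoint on F))
    (hu : ∀ i, G.VanishesOffEdges (F i) (u i)) (c : ι → ℝ) :
    G.derivNormSq (∑ i, c i • u i) = ∑ i, c i ^ 2 * G.derivNormSq (u i) := by
  simp only [derivNormSq, derivNormSqOn, tsum_univ]
  exact tsum_sum_smul_of_pairwiseDisjoint (fun _ _ _ => edgeEnergy_congr) edgeEnergy_smul hF hu c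

lemma linearIndependent_domRestrict_of_pairwiseDisjoint (hF : Pairwise (Disjoint on F))
    (hu : ∀ i, G.VanishesOffEdges (F i) (u i)) (hpos : ∀ i, 0 < G.l2normSq (u i)) :
    LinearIndependent ℝ fun i => (G.subgraphSet univ).domRestrict (u i) := by
  rw [Fintype.linearIndependent_iff]
  intro c hc i
  have hzero : ∑ j, c j • u j = 0 := funext fun x => by
    have hx := congrFun hc ⟨x, G.subgraphSet_univ ▸ mem_univ x⟩
    simp only [Finset.sum_apply, Pi.smul_apply, Pi.zero_apply] at hx ⊢
    exact hx
  have h := l2normSq_sum_smul hF hu c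
  rw [hzero, ← zero_smul ℝ (0 : X → ℝ), l2normSq_smul, zero_pow two_ne_zero, zero_mul] at h
  have hterm := (Finset.sum_eq_zero_iff_of_nonneg fun j _ =>
    mul_nonneg (sq_nonneg (c j)) (hpos j).le).1 h.symm i (Finset.mem_univ i)
  exact pow_eq_zero_iff two_ne_zero |>.1 ((mul_eq_zero.1 hterm).resolve_right (hpos i).ne')

end DisjointSupports

lemma l2inner_eq_zero_of_disjoint {F F' : Finset G.E} (hFF : Disjoint F F') {f g : X → ℝ}
    (hf : G.VanishesOffEdges F f) (hg : G.VanishesOffEdges F' g) : G.l2inner f g = 0 := by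
  refine (tsum_congr fun e => ?_).trans tsum_zero
  refine (setIntegral_congr_fun (g := fun _ => 0) measurableSet_Ioo fun t ht => ?_).trans
    (integral_zero _ _)
  by_cases he : e ∈ F
  · rw [hg e (Finset.disjoint_left.1 hFF he) t ht, mul_zero]
  · rw [hf e he t ht, zero_mul]

lemma eigenOn_le_max {A : Set G.E} {K : Set (X → ℝ)} {k : ℕ} {μ : ℝ} (φ : Fin k → X → ℝ)
    (hK : ∀ i, φ i ∈ K) (hφ : LinearIndependent ℝ fun i => (G.subgraphSet A).domRestrict (φ i))
    (hμ : ∀ c : Fin k → ℝ,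
      G.derivNormSqOn A (∑ i, c i • φ i) ≤ μ * G.l2normSqOn A (∑ i, c i • φ i)) :
    G.eigenOn A K k ≤ max μ 0 :=
  Real.sInf_le_max_zero_of_mem ⟨φ, hK, hφ, hμ⟩

theorem not_hasPurelyDiscreteSpectrumOn_of_pairwiseDisjoint {K : Set (X → ℝ)}
    {u : ℕ → X → ℝ} {F : ℕ → Finset G.E} {C : ℝ} (hF : Pairwise (Disjoint on F))
    (hu : ∀ n, G.VanishesOffEdges (F n) (u n)) (hK : ∀ n, u n ∈ K)
    (hpos : ∀ n, 0 < G.l2normSq (u n)) (hC : ∀ n, G.derivNormSq (u n) ≤ C * G.l2normSq (u n)) :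
    ¬ G.HasPurelyDiscreteSpectrumOn K := by
  have hbound : ∀ k, G.eigenOn univ K k ≤ max C 0 := fun k => by
    have hF' : Pairwise (Disjoint on fun i : Fin k => F i) := hF.comp_of_injective Fin.val_injective
    refine G.eigenOn_le_max (fun i : Fin k => u i) (fun i => hK i)
      (linearIndependent_domRestrict_of_pairwiseDisjoint hF' (fun i => hu i) fun i => hpos i)
      fun c => ?_
    change G.derivNormSq _ ≤ C * G.l2normSq _
    rw [derivNormSq_sum_smul hF' (fun i => hu i), l2normSq_sum_smul hF' (fun i => hu i),
      Finset.mul_sum]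
    exact Finset.sum_le_sum fun i _ =>
      (mul_le_mul_of_nonneg_left (hC i) (sq_nonneg (c i))).trans_eq (mul_left_comm _ _ _)
  intro h
  obtain ⟨k, hk⟩ := (h.eventually_gt_atTop (max C 0)).exists
  exact (hbound k).not_gt hk

lemma piecewiseAffine_edgeMap (W : G.V → ℝ) {e : G.E} {t : ℝ} (ht : t ∈ Icc 0 (G.len e)) :
    G.piecewiseAffine W (G.edgeMap e t) = G.affineOnEdge W e t := by
  obtain ⟨hmem, heq⟩ := (G.cover (G.edgeMap e t)).choose_spec.choose_spec
  exact G.affineOnEdge_eq_of_edgeMap_eq W hmem ht heq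

lemma edgeDeriv_piecewiseAffine (W : G.V → ℝ) {e : G.E} {t : ℝ} (ht : t ∈ Ioo 0 (G.len e)) :
    G.edgeDeriv (G.piecewiseAffine W) e t =
      (W (G.endpoint e true) - W (G.endpoint e false)) / G.len e := by
  have hloc : G.piecewiseAffine W ∘ G.edgeMap e =ᶠ[nhds t] G.affineOnEdge W e :=
    eventuallyEq_of_mem (Ioo_mem_nhds ht.1 ht.2) fun s hs =>
      piecewiseAffine_edgeMap W (Ioo_subset_Icc_self hs)
  rw [edgeDeriv, hloc.deriv_eq, (G.hasDerivAt_affineOnEdge W e t).deriv]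

lemma edgeEnergy_piecewiseAffine (W : G.V → ℝ) (e : G.E) :
    G.edgeEnergy (G.piecewiseAffine W) e =
      (W (G.endpoint e true) - W (G.endpoint e false)) ^ 2 / G.len e := by
  rw [edgeEnergy, setIntegral_congr_fun measurableSet_Ioo fun t ht => by
      rw [edgeDeriv_piecewiseAffine W ht],
    setIntegral_Ioo_const (G.len_pos e).le]
  field_simp [(G.len_pos e).ne']

lemma edgeEnergy_piecewiseAffine_le {W : G.V → ℝ} {e : G.E} {L : ℝ}
    (hW : |W (G.endpoint e true) - W (G.endpoint e false)| ≤ L * G.len e) :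
    G.edgeEnergy (G.piecewiseAffine W) e ≤ L ^ 2 * G.len e := by
  rw [edgeEnergy_piecewiseAffine, div_le_iff₀ (G.len_pos e), ← sq_abs]
  calc |W (G.endpoint e true) - W (G.endpoint e false)| ^ 2 ≤ (L * G.len e) ^ 2 :=
        pow_le_pow_left₀ (abs_nonneg _) hW 2
    _ = L ^ 2 * G.len e * G.len e := by ring

lemma edgeMass_piecewiseAffine_of_endpoint_eq {W : G.V → ℝ} {e : G.E} {w : ℝ}
    (hW : ∀ b, W (G.endpoint e b) = w) :
    G.edgeMass (G.piecewiseAffine W) e = G.len e * w ^ 2 := by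
  rw [edgeMass, setIntegral_congr_fun measurableSet_Ioo fun t ht => by
      rw [piecewiseAffine_edgeMap W (Ioo_subset_Icc_self ht), affineOnEdge, hW, hW, sub_self,
        mul_zero, add_zero],
    setIntegral_Ioo_const (G.len_pos e).le]

lemma vanishesOffEdges_piecewiseAffine {F : Finset G.E} {W : G.V → ℝ}
    (hW : ∀ e ∉ F, ∀ b, W (G.endpoint e b) = 0) :
    G.VanishesOffEdges F (G.piecewiseAffine W) := fun e he _ ht => by
  rw [piecewiseAffine_edgeMap W (Ioo_subset_Icc_self ht), G.affineOnEdge_eq_zero (hW e he)]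

lemma continuousOn_piecewiseAffine_arc (W : G.V → ℝ) (e : G.E) :
    ContinuousOn (G.piecewiseAffine W) (G.arc e) :=
  isCompact_Icc.continuousOn_image_of_comp (G.edgeMap_cont e) <|
    (G.continuous_affineOnEdge W e).continuousOn.congr fun _ ht => piecewiseAffine_edgeMap W ht

theorem memH1_piecewiseAffine {F : Finset G.E} {W : G.V → ℝ}
    (hc : Continuous (G.piecewiseAffine W)) (hW : G.VanishesOffEdges F (G.piecewiseAffine W)) :
    G.MemH1 (G.piecewiseAffine W) := by
  refine ⟨hc, hc.continuousOn, fun e _ => ?_, fun e _ t ht => ?_, ?_⟩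
  · refine (integrableOn_const (C := ((W (G.endpoint e true) - W (G.endpoint e false)) /
      G.len e) ^ 2) (by simp) (by simp)).congr_fun (fun t ht => ?_) measurableSet_Ioo
    rw [edgeDeriv_piecewiseAffine W ht]
  · rw [piecewiseAffine_edgeMap W ht, piecewiseAffine_edgeMap W (left_mem_Icc.2 (ht.1.trans ht.2)),
      setIntegral_congr_fun measurableSet_Ioo fun s hs => edgeDeriv_piecewiseAffine W
        ⟨hs.1, hs.2.trans_le ht.2⟩,
      setIntegral_Ioo_const ht.1, affineOnEdge, affineOnEdge]
    ring
  · have hsum : Summable fun e =>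
        G.edgeMass (G.piecewiseAffine W) e + G.edgeEnergy (G.piecewiseAffine W) e :=
      summable_of_ne_finset_zero (s := F) fun e he => by
        rw [edgeMass_eq_zero hW he, edgeEnergy_eq_zero hW he, add_zero]
    exact (Equiv.Set.univ G.E).summable_iff.2 hsum

end MetricGraphOn

-- Shaft vertex `k` is the paper's vertex `n ^ (-α)` with `n = k + 1`.
noncomputable def shaftPos (α : ℝ) (k : ℕ) : ℝ := ((k : ℝ) + 1) ^ (-α)

section ShaftPos

variable {α : ℝ}

lemma shaftPos_pos (α : ℝ) (k : ℕ) : 0 < shaftPos α k := by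
  unfold shaftPos
  positivity

lemma one_sub_two_thirds_rpow_pos (hα : 0 < α) : 0 < 1 - (2 / 3 : ℝ) ^ α :=
  sub_pos.2 (Real.rpow_lt_one (by norm_num) (by norm_num) hα)

lemma shaftPos_antitone (hα : 0 ≤ α) : Antitone (shaftPos α) := fun _ _ h =>
  Real.rpow_le_rpow_of_nonpos (by positivity) (by simpa using h) (neg_nonpos.2 hα)

lemma tendsto_shaftPos (hα : 0 < α) : Tendsto (shaftPos α) atTop (nhds 0) :=
  (tendsto_rpow_neg_atTop hα).comp
    (tendsto_atTop_add_const_right atTop 1 tendsto_natCast_atTop_atTop)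

lemma shaftPos_le_mul (hα : 0 ≤ α) {j k : ℕ} (h : 3 * (j + 1) ≤ 2 * (k + 1)) :
    shaftPos α k ≤ (2 / 3 : ℝ) ^ α * shaftPos α j := by
  have h' : (3 / 2 : ℝ) * ((j : ℝ) + 1) ≤ (k : ℝ) + 1 := by
    have := (Nat.cast_le (α := ℝ)).2 h
    push_cast at this
    linarith
  calc shaftPos α k ≤ ((3 / 2 : ℝ) * ((j : ℝ) + 1)) ^ (-α) :=
        Real.rpow_le_rpow_of_nonpos (by positivity) h' (neg_nonpos.2 hα)
    _ = (2 / 3 : ℝ) ^ α * shaftPos α j := by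
        rw [Real.mul_rpow (by norm_num) (by positivity), Real.rpow_neg (by norm_num),
          ← Real.inv_rpow (by norm_num), shaftPos]
        norm_num

lemma mul_shaftPos_le_sub (hα : 0 ≤ α) {j k : ℕ} (h : 3 * (j + 1) ≤ 2 * (k + 1)) :
    (1 - (2 / 3 : ℝ) ^ α) * shaftPos α j ≤ shaftPos α j - shaftPos α k := by
  linarith [shaftPos_le_mul hα h]

lemma shaftPos_le_two_mul (hα0 : 0 ≤ α) (hα : α ≤ 1 / 2) {j k : ℕ} (h : k + 1 ≤ 4 * (j + 1)) :
    shaftPos α j ≤ 2 * shaftPos α k := by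
  have h' : (k : ℝ) + 1 ≤ 4 * ((j : ℝ) + 1) := by exact_mod_cast h
  have h4 : (1 / 2 : ℝ) ≤ (4 : ℝ) ^ (-α) := by
    calc (1 / 2 : ℝ) = (4 : ℝ) ^ (-(1 / 2 : ℝ)) := by
          rw [Real.rpow_neg (by norm_num), ← Real.sqrt_eq_rpow,
            show (4 : ℝ) = 2 ^ 2 by norm_num, Real.sqrt_sq (by norm_num)]
          norm_num
      _ ≤ (4 : ℝ) ^ (-α) := Real.rpow_le_rpow_of_exponent_le (by norm_num) (by linarith)
  calc shaftPos α j ≤ 2 * ((4 : ℝ) ^ (-α) * shaftPos α j) := by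
        nlinarith [shaftPos_pos α j]
    _ = 2 * (4 * ((j : ℝ) + 1)) ^ (-α) := by
        rw [Real.mul_rpow (by norm_num) (by positivity), shaftPos]
    _ ≤ 2 * shaftPos α k := by
        gcongr
        exact Real.rpow_le_rpow_of_nonpos (by positivity) h' (neg_nonpos.2 hα0)

lemma one_le_mul_shaftPos_sq (hα : α ≤ 1 / 2) (k : ℕ) : 1 ≤ ((k : ℝ) + 1) * shaftPos α k ^ 2 := by
  have hk : (1 : ℝ) ≤ (k : ℝ) + 1 := by linarith [k.cast_nonneg (α := ℝ)]
  calc (1 : ℝ) = ((k : ℝ) + 1) * ((k : ℝ) + 1) ^ (-1 : ℝ) := by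
        rw [Real.rpow_neg_one, mul_inv_cancel₀ (by positivity)]
    _ ≤ ((k : ℝ) + 1) * ((k : ℝ) + 1) ^ (-α * 2) :=
        mul_le_mul_of_nonneg_left (Real.rpow_le_rpow_of_exponent_le hk (by linarith))
          (by positivity)
    _ = ((k : ℝ) + 1) * shaftPos α k ^ 2 := by
        rw [Real.rpow_mul (by positivity), shaftPos]
        norm_cast

lemma le_bump_ramp_widths (hα : 0 ≤ α) {A : ℕ} (hA : 1 ≤ A) :
    (1 - (2 / 3 : ℝ) ^ α) * shaftPos α (4 * A) ≤ shaftPos α (4 * A) - shaftPos α (8 * A) ∧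
      (1 - (2 / 3 : ℝ) ^ α) * shaftPos α (4 * A) ≤ shaftPos α A - shaftPos α (2 * A) := by
  have hκ : 0 ≤ 1 - (2 / 3 : ℝ) ^ α :=
    sub_nonneg.2 (Real.rpow_le_one (by norm_num) (by norm_num) hα)
  refine ⟨mul_shaftPos_le_sub hα (by omega), ?_⟩
  calc (1 - (2 / 3 : ℝ) ^ α) * shaftPos α (4 * A) ≤ (1 - (2 / 3 : ℝ) ^ α) * shaftPos α A :=
        mul_le_mul_of_nonneg_left (shaftPos_antitone hα (by omega)) hκ
    _ ≤ shaftPos α A - shaftPos α (2 * A) := mul_shaftPos_le_sub hα (by omega)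

end ShaftPos

noncomputable def trapezoid (p q r s x : ℝ) : ℝ :=
  max 0 (min 1 (min ((x - p) / (q - p)) ((s - x) / (s - r))))

section Trapezoid

variable {p q r s : ℝ}

lemma trapezoid_of_le_left (hpq : p ≤ q) {x : ℝ} (hx : x ≤ p) : trapezoid p q r s x = 0 :=
  max_eq_left <| min_le_of_right_le <| min_le_of_left_le <|
    div_nonpos_of_nonpos_of_nonneg (by linarith) (by linarith)

lemma trapezoid_of_right_le (hrs : r ≤ s) {x : ℝ} (hx : s ≤ x) : trapezoid p q r s x = 0 :=
  max_eq_left <| min_le_of_right_le <| min_le_of_right_le <|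
    div_nonpos_of_nonpos_of_nonneg (by linarith) (by linarith)

lemma trapezoid_of_mem_Icc (hpq : p < q) (hrs : r < s) {x : ℝ} (hx : x ∈ Icc q r) :
    trapezoid p q r s x = 1 := by
  have h₁ : 1 ≤ (x - p) / (q - p) := by rw [le_div_iff₀ (sub_pos.2 hpq)]; linarith [hx.1]
  have h₂ : 1 ≤ (s - x) / (s - r) := by rw [le_div_iff₀ (sub_pos.2 hrs)]; linarith [hx.2]
  rw [trapezoid, min_eq_left (le_min h₁ h₂), max_eq_right zero_le_one]

lemma abs_trapezoid_sub_le {m : ℝ} (hm : 0 < m) (hq : m ≤ q - p) (hs : m ≤ s - r) (x y : ℝ) :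
    |trapezoid p q r s x - trapezoid p q r s y| ≤ |x - y| / m := by
  have h₁ : |(x - p) / (q - p) - (y - p) / (q - p)| ≤ |x - y| / m := by
    rw [← sub_div, abs_div, abs_of_pos (hm.trans_le hq), sub_sub_sub_cancel_right]
    exact div_le_div_of_nonneg_left (abs_nonneg _) hm hq
  have h₂ : |(s - x) / (s - r) - (s - y) / (s - r)| ≤ |x - y| / m := by
    rw [← sub_div, abs_div, abs_of_pos (hm.trans_le hs), sub_sub_sub_cancel_left, abs_sub_comm]
    exact div_le_div_of_nonneg_left (abs_nonneg _) hm hs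
  unfold trapezoid
  set u := min ((x - p) / (q - p)) ((s - x) / (s - r))
  set v := min ((y - p) / (q - p)) ((s - y) / (s - r))
  calc |max 0 (min 1 u) - max 0 (min 1 v)| ≤ max |0 - 0| |min 1 u - min 1 v| :=
        abs_max_sub_max_le_max _ _ _ _
    _ = |min 1 u - min 1 v| := by simp
    _ ≤ max |1 - 1| |u - v| := abs_min_sub_min_le_max _ _ _ _
    _ = |u - v| := by simp
    _ ≤ max |(x - p) / (q - p) - (y - p) / (q - p)| |(s - x) / (s - r) - (s - y) / (s - r)| :=
        abs_min_sub_min_le_max _ _ _ _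
    _ ≤ |x - y| / m := max_le h₁ h₂

end Trapezoid

open MetricGraphOn

structure DiagonalCombData {X : Type} [MetricSpace X] (G : MetricGraphOn X) (α : ℝ) where
  eE : (ℕ ⊕ ℕ) ≃ G.E
  eV : (ℕ ⊕ ℕ) ≃ G.V
  len_shaft : ∀ n : ℕ, G.len (eE (Sum.inl n)) = ((n : ℝ) + 1) ^ (-α) - ((n : ℝ) + 2) ^ (-α)
  len_tooth : ∀ n : ℕ, G.len (eE (Sum.inr n)) = ((n : ℝ) + 1) ^ (-α)
  endpoint_shaft : ∀ n : ℕ, G.endpoint (eE (Sum.inl n)) false = eV (Sum.inl (n + 1)) ∧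
    G.endpoint (eE (Sum.inl n)) true = eV (Sum.inl n)
  endpoint_tooth : ∀ n : ℕ, G.endpoint (eE (Sum.inr n)) false = eV (Sum.inl n) ∧
    G.endpoint (eE (Sum.inr n)) true = eV (Sum.inr n)

namespace DiagonalCombData

variable {X : Type} [MetricSpace X] {G : MetricGraphOn X} {α : ℝ} (D : DiagonalCombData G α)

def edgeIndex (e : G.E) : ℕ := (D.eE.symm e).elim id id

def vertexIndex (v : G.V) : ℕ := (D.eV.symm v).elim id id

def shaftVertex (k : ℕ) : X := G.vertexMap (D.eV (Sum.inl k))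

def edgesIn (s : Finset ℕ) : Finset G.E := (s.disjSum s).map D.eE.toEmbedding

@[simp] lemma edgeIndex_eE (q : ℕ ⊕ ℕ) : D.edgeIndex (D.eE q) = q.elim id id := by
  simp [edgeIndex]

@[simp] lemma vertexIndex_eV (q : ℕ ⊕ ℕ) : D.vertexIndex (D.eV q) = q.elim id id := by
  simp [vertexIndex]

lemma len_shaft_eq (k : ℕ) : G.len (D.eE (Sum.inl k)) = shaftPos α k - shaftPos α (k + 1) := by
  rw [D.len_shaft, shaftPos, shaftPos]
  push_cast
  ring_nf

lemma len_tooth_eq (k : ℕ) : G.len (D.eE (Sum.inr k)) = shaftPos α k := D.len_tooth k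

lemma vertexIndex_endpoint (e : G.E) (b : Bool) :
    D.edgeIndex e ≤ D.vertexIndex (G.endpoint e b) ∧
      D.vertexIndex (G.endpoint e b) ≤ D.edgeIndex e + 1 := by
  obtain ⟨q, rfl⟩ := D.eE.surjective e
  rcases q with k | k <;> cases b <;> simp [D.endpoint_shaft, D.endpoint_tooth]

lemma mem_edgesIn {s : Finset ℕ} {e : G.E} : e ∈ D.edgesIn s ↔ D.edgeIndex e ∈ s := by
  obtain ⟨q, rfl⟩ := D.eE.surjective e
  rcases q with k | k <;> simp [edgesIn]

lemma sum_edgesIn (s : Finset ℕ) (g : G.E → ℝ) :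
    ∑ e ∈ D.edgesIn s, g e = ∑ k ∈ s, g (D.eE (Sum.inl k)) + ∑ k ∈ s, g (D.eE (Sum.inr k)) := by
  simp [edgesIn, Finset.sum_disjSum]

lemma dist_shaftVertex_succ_le (k : ℕ) :
    dist (D.shaftVertex (k + 1)) (D.shaftVertex k) ≤ shaftPos α k - shaftPos α (k + 1) := by
  have h := G.dist_edgeMap_vertexMap_le (D.eE (Sum.inl k)) true
    (left_mem_Icc.2 (G.len_pos _).le)
  rwa [G.edgeMap_zero, (D.endpoint_shaft k).1, (D.endpoint_shaft k).2, D.len_shaft_eq] at h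

lemma dist_shaftVertex_le {j k : ℕ} (h : j ≤ k) :
    dist (D.shaftVertex k) (D.shaftVertex j) ≤ shaftPos α j - shaftPos α k := by
  induction k, h using Nat.le_induction with
  | base => simp
  | succ k _ ih =>
    linarith [dist_triangle (D.shaftVertex (k + 1)) (D.shaftVertex k) (D.shaftVertex j),
      D.dist_shaftVertex_succ_le k]

lemma dist_shaftVertex_le_of_mem_arc {m : ℕ} {e : G.E} (hm : m ≤ D.edgeIndex e) {x : X}
    (hx : x ∈ G.arc e) : dist x (D.shaftVertex m) ≤ shaftPos α m := by
  obtain ⟨t, ht, rfl⟩ := hx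
  obtain ⟨b, hb, hlen⟩ : ∃ b, G.endpoint e b = D.eV (Sum.inl (D.edgeIndex e)) ∧
      G.len e ≤ shaftPos α (D.edgeIndex e) := by
    obtain ⟨q, rfl⟩ := D.eE.surjective e
    rcases q with k | k
    · exact ⟨true, by simp [D.endpoint_shaft],
        by simp [D.len_shaft_eq, (shaftPos_pos α (k + 1)).le]⟩
    · exact ⟨false, by simp [D.endpoint_tooth], by simp [D.len_tooth_eq]⟩
  have h₁ : dist (G.edgeMap e t) (D.shaftVertex (D.edgeIndex e)) ≤ G.len e := by
    rw [shaftVertex, ← hb]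
    exact G.dist_edgeMap_vertexMap_le e b ht
  linarith [dist_triangle (G.edgeMap e t) (D.shaftVertex (D.edgeIndex e)) (D.shaftVertex m),
    D.dist_shaftVertex_le hm]

lemma mem_arc_or_forall_dist_le_of_mem_closure {S : Set G.E} {x : X}
    (hx : x ∈ closure (⋃ e ∈ S, G.arc e)) :
    (∃ e ∈ S, x ∈ G.arc e) ∨ ∀ m, dist x (D.shaftVertex m) ≤ shaftPos α m := by
  refine or_iff_not_imp_left.2 fun hxS m => ?_
  have hfin : (S ∩ {e | D.edgeIndex e < m}).Finite :=
    (D.edgesIn (Finset.range m)).finite_toSet.subset fun e he =>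
      D.mem_edgesIn.2 (Finset.mem_range.2 he.2)
  have hsub : (⋃ e ∈ S, G.arc e) ⊆ (⋃ e ∈ S ∩ {e | D.edgeIndex e < m}, G.arc e) ∪
      Metric.closedBall (D.shaftVertex m) (shaftPos α m) := by
    refine iUnion₂_subset fun e he y hy => ?_
    by_cases hem : D.edgeIndex e < m
    · exact Or.inl (mem_biUnion ⟨he, hem⟩ hy)
    · exact Or.inr (D.dist_shaftVertex_le_of_mem_arc (not_lt.1 hem) hy)
  have hclosed := (hfin.isClosed_biUnion fun e _ => G.isClosed_arc e).union
    (Metric.isClosed_closedBall (x := D.shaftVertex m) (ε := shaftPos α m))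
  rcases hclosed.closure_subset_iff.2 hsub hx with h | h
  · obtain ⟨e, he, hxe⟩ := mem_iUnion₂.1 h
    exact absurd ⟨e, he.1, hxe⟩ hxS
  · exact h

lemma eq_of_forall_dist_shaftVertex_le (hα : 0 < α) {x y : X}
    (hx : ∀ m, dist x (D.shaftVertex m) ≤ shaftPos α m)
    (hy : ∀ m, dist y (D.shaftVertex m) ≤ shaftPos α m) : x = y := by
  refine eq_of_forall_dist_le fun ε hε => ?_
  obtain ⟨m, hm⟩ := ((tendsto_shaftPos hα).eventually (gt_mem_nhds (half_pos hε))).exists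
  linarith [dist_triangle_right x y (D.shaftVertex m), hx m, hy m]

lemma edgeIndex_le_of_mem_arc {e e' : G.E} {x : X} (hx : x ∈ G.arc e) (hx' : x ∈ G.arc e') :
    D.edgeIndex e' ≤ D.edgeIndex e + 1 := by
  obtain ⟨t, ht, rfl⟩ := hx
  obtain ⟨t', ht', h⟩ := hx'
  obtain ⟨rfl, -⟩ | ⟨b, b', -, -, hbb⟩ := G.eq_or_endpoint_eq_of_edgeMap_eq ht ht' h.symm
  · omega
  · have h₁ := D.vertexIndex_endpoint e b
    have h₂ := D.vertexIndex_endpoint e' b'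
    rw [hbb] at h₁
    omega

/-- `X` may contain the limit of the shaft vertices; like every point of `X` it lies on an edge,
hence only on edges of bounded index. -/
lemma exists_forall_notMem_arc (hα : 0 < α) :
    ∃ m₀, ∀ x, (∀ m, dist x (D.shaftVertex m) ≤ shaftPos α m) →
      ∀ e, m₀ ≤ D.edgeIndex e → x ∉ G.arc e := by
  by_cases h : ∃ z : X, ∀ m, dist z (D.shaftVertex m) ≤ shaftPos α m
  · obtain ⟨z, hz⟩ := h
    obtain ⟨e₀, he₀⟩ := G.exists_mem_arc z
    refine ⟨D.edgeIndex e₀ + 2, fun x hx e he hxe => ?_⟩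
    rw [D.eq_of_forall_dist_shaftVertex_le hα hx hz] at hxe
    have := D.edgeIndex_le_of_mem_arc he₀ hxe
    omega
  · exact ⟨0, fun x hx => absurd ⟨x, hx⟩ h⟩

theorem exists_continuous_piecewiseAffine (hα : 0 < α) :
    ∃ m₀, ∀ (F : Finset G.E) (W : G.V → ℝ), (∀ e ∉ F, ∀ b, W (G.endpoint e b) = 0) →
      (∀ e ∈ F, m₀ ≤ D.edgeIndex e) → Continuous (G.piecewiseAffine W) := by
  obtain ⟨m₀, hm₀⟩ := D.exists_forall_notMem_arc hα
  refine ⟨m₀, fun F W hW hF => ?_⟩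
  have hzero : ∀ e ∉ F, ∀ x ∈ G.arc e, G.piecewiseAffine W x = 0 := by
    rintro e he _ ⟨t, ht, rfl⟩
    rw [piecewiseAffine_edgeMap W ht, G.affineOnEdge_eq_zero (hW e he)]
  have hon : ContinuousOn (G.piecewiseAffine W) (⋃ e : F, G.arc e) :=
    (locallyFinite_of_finite _).continuousOn_iUnion (fun e => G.isClosed_arc e)
      fun e => continuousOn_piecewiseAffine_arc W e
  -- A limit of points on edges outside `F` lies on such an edge, unless it is the limit of the
  -- shaft vertices, which lies on no edge of `F`.
  have hoff : ContinuousOn (G.piecewiseAffine W) (closure (⋃ e ∈ (↑F : Set G.E)ᶜ, G.arc e)) := by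
    refine continuousOn_const (c := 0).congr fun x hx => ?_
    rcases D.mem_arc_or_forall_dist_le_of_mem_closure hx with ⟨e, he, hxe⟩ | hend
    · exact hzero e he x hxe
    · obtain ⟨e, hxe⟩ := G.exists_mem_arc x
      exact hzero e (fun heF => hm₀ x hend e (hF e heF) hxe) x hxe
  have hcover : (⋃ e : F, G.arc e) ∪ closure (⋃ e ∈ (↑F : Set G.E)ᶜ, G.arc e) = univ := by
    refine eq_univ_of_forall fun x => ?_
    obtain ⟨e, hxe⟩ := G.exists_mem_arc x
    by_cases he : e ∈ F
    · exact Or.inl (mem_iUnion.2 ⟨⟨e, he⟩, hxe⟩)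
    · exact Or.inr (subset_closure (mem_biUnion (s := (↑F : Set G.E)ᶜ) he hxe))
  rw [← continuousOn_univ, ← hcover]
  exact hon.union_of_isClosed hoff (isClosed_iUnion_of_finite fun e => G.isClosed_arc e)
    isClosed_closure

-- Tooth tips get the value of their base vertex, so the bump is constant along every tooth.
noncomputable def bumpValues (A : ℕ) (v : G.V) : ℝ :=
  trapezoid (shaftPos α (8 * A)) (shaftPos α (4 * A)) (shaftPos α (2 * A)) (shaftPos α A)
    (shaftPos α (D.vertexIndex v))

def block (A : ℕ) : Finset G.E := D.edgesIn (Finset.Ico A (8 * A))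

lemma mem_block {A : ℕ} {e : G.E} : e ∈ D.block A ↔ A ≤ D.edgeIndex e ∧ D.edgeIndex e < 8 * A := by
  rw [block, mem_edgesIn, Finset.mem_Ico]

lemma bumpValues_endpoint_of_notMem_block (hα : 0 ≤ α) {A : ℕ} {e : G.E} (he : e ∉ D.block A)
    (b : Bool) : D.bumpValues A (G.endpoint e b) = 0 := by
  rw [mem_block] at he
  have h := D.vertexIndex_endpoint e b
  rcases (by omega : D.vertexIndex (G.endpoint e b) ≤ A ∨
      8 * A ≤ D.vertexIndex (G.endpoint e b)) with hv | hv
  · exact trapezoid_of_right_le (shaftPos_antitone hα (by omega)) (shaftPos_antitone hα hv)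
  · exact trapezoid_of_le_left (shaftPos_antitone hα (by omega)) (shaftPos_antitone hα hv)

lemma vanishesOffEdges_bump (hα : 0 ≤ α) (A : ℕ) :
    G.VanishesOffEdges (D.block A) (G.piecewiseAffine (D.bumpValues A)) :=
  vanishesOffEdges_piecewiseAffine fun _ he b => D.bumpValues_endpoint_of_notMem_block hα he b

lemma derivNormSq_bump_le (hα : 0 < α) (hα' : α ≤ 1 / 2) {A : ℕ} (hA : 1 ≤ A) :
    G.derivNormSq (G.piecewiseAffine (D.bumpValues A)) ≤
      2 / ((1 - (2 / 3 : ℝ) ^ α) ^ 2 * shaftPos α (4 * A)) := by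
  obtain ⟨h₁, h₂⟩ := le_bump_ramp_widths hα.le hA
  set κ := 1 - (2 / 3 : ℝ) ^ α
  have hκ : 0 < κ := one_sub_two_thirds_rpow_pos hα
  have hc := shaftPos_pos α (4 * A)
  set L := 1 / (κ * shaftPos α (4 * A)) with hL
  have hshaft : ∀ k, G.edgeEnergy (G.piecewiseAffine (D.bumpValues A)) (D.eE (Sum.inl k)) ≤
      L ^ 2 * (shaftPos α k - shaftPos α (k + 1)) := fun k => by
    rw [← D.len_shaft_eq]
    refine edgeEnergy_piecewiseAffine_le ?_
    simp only [bumpValues, D.endpoint_shaft, vertexIndex_eV, Sum.elim_inl, id, D.len_shaft_eq]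
    refine (abs_trapezoid_sub_le (by positivity) h₁ h₂ _ _).trans_eq ?_
    rw [abs_of_nonneg (sub_nonneg.2 (shaftPos_antitone hα.le k.le_succ)), hL]
    field_simp
  have htooth : ∀ k, G.edgeEnergy (G.piecewiseAffine (D.bumpValues A)) (D.eE (Sum.inr k)) = 0 :=
    fun k => by simp [edgeEnergy_piecewiseAffine, bumpValues, D.endpoint_tooth]
  have htelescope : ∑ k ∈ Finset.Ico A (8 * A), (shaftPos α k - shaftPos α (k + 1)) =
      shaftPos α A - shaftPos α (8 * A) := by
    simpa only [neg_sub_neg] using Finset.sum_Ico_sub (fun k => -shaftPos α k)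
      (show A ≤ 8 * A by omega)
  rw [derivNormSq_eq_sum (D.vanishesOffEdges_bump hα.le A), block, sum_edgesIn,
    Finset.sum_eq_zero fun k _ => htooth k, add_zero]
  calc _ ≤ ∑ k ∈ Finset.Ico A (8 * A), L ^ 2 * (shaftPos α k - shaftPos α (k + 1)) :=
        Finset.sum_le_sum fun k _ => hshaft k
    _ = L ^ 2 * (shaftPos α A - shaftPos α (8 * A)) := by rw [← Finset.mul_sum, htelescope]
    _ ≤ L ^ 2 * (2 * shaftPos α (4 * A)) := by
        gcongr
        linarith [shaftPos_pos α (8 * A), shaftPos_le_two_mul hα.le hα' (j := A) (k := 4 * A)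
          (by omega)]
    _ = 2 / (κ ^ 2 * shaftPos α (4 * A)) := by
        rw [hL]
        field_simp

lemma mul_shaftPos_le_l2normSq_bump (hα : 0 < α) {A : ℕ} (hA : 1 ≤ A) :
    (2 * A + 1) * shaftPos α (4 * A) ≤ G.l2normSq (G.piecewiseAffine (D.bumpValues A)) := by
  have hκ := one_sub_two_thirds_rpow_pos hα
  have hc := shaftPos_pos α (4 * A)
  obtain ⟨h₁, h₂⟩ := le_bump_ramp_widths hα.le hA
  have hplateau : ∀ k ∈ Finset.Icc (2 * A) (4 * A),
      G.edgeMass (G.piecewiseAffine (D.bumpValues A)) (D.eE (Sum.inr k)) = shaftPos α k := by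
    intro k hk
    rw [Finset.mem_Icc] at hk
    rw [edgeMass_piecewiseAffine_of_endpoint_eq (w := 1) fun b => ?_, D.len_tooth_eq, one_pow,
      mul_one]
    cases b <;>
    · simp only [bumpValues, D.endpoint_tooth, vertexIndex_eV, Sum.elim_inl, Sum.elim_inr, id]
      exact trapezoid_of_mem_Icc (by linarith [mul_pos hκ hc]) (by linarith [mul_pos hκ hc])
        ⟨shaftPos_antitone hα.le hk.2, shaftPos_antitone hα.le hk.1⟩
  rw [l2normSq_eq_sum (D.vanishesOffEdges_bump hα.le A), block, sum_edgesIn]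
  calc (2 * A + 1) * shaftPos α (4 * A)
        = ∑ _k ∈ Finset.Icc (2 * A) (4 * A), shaftPos α (4 * A) := by
        rw [Finset.sum_const, Nat.card_Icc, nsmul_eq_mul]
        congr 1
        rw [show 4 * A + 1 - 2 * A = 2 * A + 1 by omega]
        push_cast
        ring
    _ ≤ ∑ k ∈ Finset.Icc (2 * A) (4 * A), shaftPos α k :=
        Finset.sum_le_sum fun k hk => shaftPos_antitone hα.le (Finset.mem_Icc.1 hk).2
    _ = ∑ k ∈ Finset.Icc (2 * A) (4 * A),
          G.edgeMass (G.piecewiseAffine (D.bumpValues A)) (D.eE (Sum.inr k)) :=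
        (Finset.sum_congr rfl hplateau).symm
    _ ≤ ∑ k ∈ Finset.Ico A (8 * A),
          G.edgeMass (G.piecewiseAffine (D.bumpValues A)) (D.eE (Sum.inr k)) :=
        Finset.sum_le_sum_of_subset_of_nonneg
          (fun k hk => by simp only [Finset.mem_Icc, Finset.mem_Ico] at hk ⊢; omega)
          fun _ _ _ => edgeMass_nonneg _ _
    _ ≤ _ := le_add_of_nonneg_left (Finset.sum_nonneg fun _ _ => edgeMass_nonneg _ _)

lemma derivNormSq_bump_le_mul (hα : 0 < α) (hα' : α ≤ 1 / 2) {A : ℕ} (hA : 1 ≤ A) :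
    G.derivNormSq (G.piecewiseAffine (D.bumpValues A)) ≤
      4 / (1 - (2 / 3 : ℝ) ^ α) ^ 2 * G.l2normSq (G.piecewiseAffine (D.bumpValues A)) := by
  set κ := 1 - (2 / 3 : ℝ) ^ α
  have hκ : 0 < κ := one_sub_two_thirds_rpow_pos hα
  have hc := shaftPos_pos α (4 * A)
  have hsq := one_le_mul_shaftPos_sq hα' (4 * A)
  push_cast at hsq
  calc _ ≤ 2 / (κ ^ 2 * shaftPos α (4 * A)) := D.derivNormSq_bump_le hα hα' hA
    _ ≤ 4 / κ ^ 2 * ((2 * A + 1) * shaftPos α (4 * A)) := by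
        rw [div_le_iff₀ (by positivity)]
        have h : 4 / κ ^ 2 * ((2 * A + 1) * shaftPos α (4 * A)) * (κ ^ 2 * shaftPos α (4 * A)) =
            4 * (2 * A + 1) * shaftPos α (4 * A) ^ 2 := by
          field_simp
        rw [h]
        nlinarith
    _ ≤ _ := by
        gcongr
        exact D.mul_shaftPos_le_l2normSq_bump hα hA

lemma exists_normalized_bump (hα : 0 < α) (hα' : α ≤ 1 / 2) {A : ℕ} (hA : 1 ≤ A) :
    ∃ W : G.V → ℝ, (∀ e ∉ D.block A, ∀ b, W (G.endpoint e b) = 0) ∧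
      G.l2normSq (G.piecewiseAffine W) = 1 ∧
      G.derivNormSq (G.piecewiseAffine W) ≤ 4 / (1 - (2 / 3 : ℝ) ^ α) ^ 2 := by
  set M := G.l2normSq (G.piecewiseAffine (D.bumpValues A))
  have hM : 0 < M :=
    lt_of_lt_of_le (by have := shaftPos_pos α (4 * A); positivity)
      (D.mul_shaftPos_le_l2normSq_bump hα hA)
  have hscale : (√M)⁻¹ ^ 2 * M = 1 := by
    rw [inv_pow, Real.sq_sqrt hM.le, inv_mul_cancel₀ hM.ne']
  refine ⟨(√M)⁻¹ • D.bumpValues A, fun e he b => ?_, ?_, ?_⟩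
  · simp [D.bumpValues_endpoint_of_notMem_block hα.le he b]
  · rw [map_smul, l2normSq_smul, hscale]
  · rw [map_smul, derivNormSq_smul]
    calc _ ≤ (√M)⁻¹ ^ 2 * (4 / (1 - (2 / 3 : ℝ) ^ α) ^ 2 * M) :=
          mul_le_mul_of_nonneg_left (D.derivNormSq_bump_le_mul hα hα' hA) (sq_nonneg _)
      _ = 4 / (1 - (2 / 3 : ℝ) ^ α) ^ 2 := by rw [mul_left_comm, hscale, mul_one]

theorem exists_bumps (D : DiagonalCombData G α) (hα : 0 < α) (hα' : α ≤ 1 / 2) :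
    ∃ (u : ℕ → X → ℝ) (F : ℕ → Finset G.E), Pairwise (Disjoint on F) ∧
      (∀ n, G.VanishesOffEdges (F n) (u n)) ∧ (∀ n, G.MemH1 (u n)) ∧
      (∀ n, G.l2normSq (u n) = 1) ∧ ∃ C, ∀ n, G.derivNormSq (u n) ≤ C := by
  obtain ⟨m₀, hcont⟩ := D.exists_continuous_piecewiseAffine hα
  set A : ℕ → ℕ := fun n => (m₀ + 1) * 8 ^ n with hA
  have hA₀ : ∀ n, m₀ + 1 ≤ A n := fun n => Nat.le_mul_of_pos_right _ (by positivity)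
  have hsep : ∀ {m n}, m < n → 8 * A m ≤ A n := fun {m n} h => by
    simp only [hA]
    rw [mul_left_comm, ← pow_succ']
    exact Nat.mul_le_mul_left _ (Nat.pow_le_pow_right (by norm_num) h)
  choose W hW hnorm hC using fun n => D.exists_normalized_bump hα hα' (A := A n) (by
    linarith [hA₀ n])
  have hv : ∀ n, G.VanishesOffEdges (D.block (A n)) (G.piecewiseAffine (W n)) := fun n =>
    vanishesOffEdges_piecewiseAffine (hW n)
  refine ⟨fun n => G.piecewiseAffine (W n), fun n => D.block (A n), fun m n hmn => ?_, hv,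
    fun n => memH1_piecewiseAffine (hcont _ _ (hW n) fun e he => ?_) (hv n), hnorm, _, hC⟩
  · refine Finset.disjoint_left.2 fun e hm hn => ?_
    simp only [mem_block] at hm hn
    rcases lt_or_gt_of_ne hmn with h | h <;> have := hsep h <;> omega
  · have := (D.mem_block.1 he).1
    have := hA₀ n
    omega

end DiagonalCombData

open MetricGraphOn in
/-- For `α ∈ (0, 1/2]` there is an `L²(G_α)`-orthonormal sequence
in `H¹(G_α)` with uniformly bounded `H¹` norms; in particular the Neumann extension
on the diagonal comb `G_α` has nonempty essential spectrum (its spectrum is not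
purely discrete). -/
theorem statement2 (α : ℝ) (hα0 : 0 < α) (hα : α ≤ 1 / 2)
    (X : Type) [MetricSpace X] (G : MetricGraphOn X) (hG : IsDiagonalComb G α) :
    (∃ u : ℕ → X → ℝ, (∀ n, G.MemH1 (u n)) ∧
      (∀ n, G.l2inner (u n) (u n) = 1) ∧
      (∀ m n, m ≠ n → G.l2inner (u m) (u n) = 0) ∧
      ∃ C : ℝ, ∀ n, G.h1normSq (u n) ≤ C) ∧
    ¬ G.HasPurelyDiscreteSpectrumOn {f | G.MemH1 f} := by
  obtain ⟨eE, eV, hshaft, htooth, hends_shaft, hends_tooth⟩ := hG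
  obtain ⟨u, F, hF, hu, hH1, hnorm, C, hC⟩ :=
    DiagonalCombData.exists_bumps ⟨eE, eV, hshaft, htooth, hends_shaft, hends_tooth⟩ hα0 hα
  refine ⟨⟨u, hH1, fun n => by rw [l2inner_self, hnorm], fun m n hmn =>
    l2inner_eq_zero_of_disjoint (hF hmn) (hu m) (hu n), 1 + C, fun n => ?_⟩,
    not_hasPurelyDiscreteSpectrumOn_of_pairwiseDisjoint hF hu hH1
      (fun n => by rw [hnorm]; exact one_pos) fun n => by rw [hnorm, mul_one]; exact hC n⟩
  rw [h1normSq, hnorm]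
  linarith [hC n]
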